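/- arXiv:1103.1284 — 2 statements merged into one kernel-verified Lean document; each statement's English description precedes it below -/
import Mathlib

section
/- Let 1 < p < ∞ and let p' be the conjugate exponent (1/p + 1/p' = 1). Define k(p) = 1 if p ≥ p' and k(p) = 2^{(p'/p) − 1} if p < p'. Then for all real numbers a, b, |sign(a)|a|^p − sign(b)|b|^p| ≤ |a − b|^p + p·(2·k(p))^{p/p'}·|a − b|·(|a|^{p−1} + |b|^{p−1})·C for some universal constant C depending only on p; in particular, for a, b ∈ [−1, 1], |sign(a)|a|^p − sign(b)|b|^p| ≤ |a − b|^p + p·(2·k(p))^{p/p'}·|a − b|. -/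
/-!
The term `|a - b| ^ p` is not needed: already
`|sign a |a|^p - sign b |b|^p| ≤ p |a - b| (|a|^(p-1) + |b|^(p-1))`.
For `a, b` on the same side of `0` this is the tangent-line inequality of the convex map `x ↦ x^p`;
across `0` the difference is `a^p + |b|^p = a a^(p-1) + |b| |b|^(p-1)`, with `a, |b| ≤ |a - b|`.
Since `(2 k(p)) ^ (p/p') ≥ 2`, the first bound holds with `C = 1`, and the second follows because
`|a|^(p-1) + |b|^(p-1) ≤ 2` on `[-1, 1]`.
-/

open Real Set

noncomputable def signedRpow (p x : ℝ) : ℝ := Real.sign x * |x| ^ p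

lemma signedRpow_of_nonneg {p x : ℝ} (hp : p ≠ 0) (hx : 0 ≤ x) : signedRpow p x = x ^ p := by
  rcases hx.eq_or_lt with rfl | hx
  · simp [signedRpow, zero_rpow hp]
  · rw [signedRpow, Real.sign_of_pos hx, abs_of_pos hx, one_mul]

lemma signedRpow_neg (p x : ℝ) : signedRpow p (-x) = -signedRpow p x := by
  simp [signedRpow, Real.sign_neg]

/-- Tangent-line inequality for the convex function `x ↦ x ^ p` at the right endpoint. -/
lemma rpow_sub_rpow_le_of_le {p a b : ℝ} (hp : 1 ≤ p) (hb : 0 ≤ b) (hba : b ≤ a) :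
    a ^ p - b ^ p ≤ p * (a - b) * a ^ (p - 1) := by
  rcases hba.eq_or_lt with rfl | hba
  · simp
  have hslope := (convexOn_rpow hp).slope_le_of_hasDerivAt (mem_Ici.2 hb)
    (mem_Ici.2 (hb.trans hba.le)) hba (hasDerivAt_rpow_const (Or.inr hp))
  rw [slope_def_field, div_le_iff₀ (sub_pos.2 hba)] at hslope
  linarith

lemma rpow_add_rpow_le {p a b : ℝ} (hp : 1 ≤ p) (ha : 0 ≤ a) (hb : 0 ≤ b) :
    a ^ p + b ^ p ≤ p * (a + b) * (a ^ (p - 1) + b ^ (p - 1)) := by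
  have hsplit : ∀ x : ℝ, 0 ≤ x → x ^ p = x * x ^ (p - 1) := fun x hx => by
    rw [← rpow_one_add' hx (by linarith), add_sub_cancel]
  have ha' := rpow_nonneg ha (p - 1)
  have hb' := rpow_nonneg hb (p - 1)
  rw [hsplit a ha, hsplit b hb]
  calc a * a ^ (p - 1) + b * b ^ (p - 1)
      ≤ 1 * (a + b) * (a ^ (p - 1) + b ^ (p - 1)) := by nlinarith [mul_nonneg ha hb', mul_nonneg hb ha']
    _ ≤ p * (a + b) * (a ^ (p - 1) + b ^ (p - 1)) := by gcongr

lemma abs_signedRpow_sub_le_of_le {p a b : ℝ} (hp : 1 ≤ p) (hba : b ≤ a) :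
    |signedRpow p a - signedRpow p b| ≤ p * (a - b) * (|a| ^ (p - 1) + |b| ^ (p - 1)) := by
  have hp0 : p ≠ 0 := by positivity
  have nonneg_case : ∀ {a b : ℝ}, 0 ≤ b → b ≤ a →
      |signedRpow p a - signedRpow p b| ≤ p * (a - b) * (|a| ^ (p - 1) + |b| ^ (p - 1)) := by
    intro a b hb hba
    have ha := hb.trans hba
    rw [signedRpow_of_nonneg hp0 ha, signedRpow_of_nonneg hp0 hb, abs_of_nonneg ha, abs_of_nonneg hb,
      abs_of_nonneg (sub_nonneg.2 (rpow_le_rpow hb hba (by linarith)))]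
    calc a ^ p - b ^ p ≤ p * (a - b) * a ^ (p - 1) := rpow_sub_rpow_le_of_le hp hb hba
      _ ≤ p * (a - b) * (a ^ (p - 1) + b ^ (p - 1)) := by
          gcongr
          exact le_add_of_nonneg_right (rpow_nonneg hb _)
  rcases le_total 0 b with hb | hb
  · exact nonneg_case hb hba
  rcases le_total a 0 with ha | ha
  · have h := nonneg_case (neg_nonneg.2 ha) (neg_le_neg hba)
    rwa [signedRpow_neg, signedRpow_neg, abs_neg, abs_neg, neg_sub_neg,
      neg_sub_neg, add_comm (|b| ^ _)] at h
  · rw [signedRpow_of_nonneg hp0 ha, ← neg_neg b, signedRpow_neg, signedRpow_of_nonneg hp0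
      (neg_nonneg.2 hb), sub_neg_eq_add, abs_neg, abs_of_nonneg ha, abs_of_nonneg (neg_nonneg.2 hb),
      abs_of_nonneg (add_nonneg (rpow_nonneg ha _) (rpow_nonneg (neg_nonneg.2 hb) _)), sub_neg_eq_add]
    exact rpow_add_rpow_le hp ha (neg_nonneg.2 hb)

lemma abs_signedRpow_sub_le {p : ℝ} (hp : 1 ≤ p) (a b : ℝ) :
    |signedRpow p a - signedRpow p b| ≤ p * |a - b| * (|a| ^ (p - 1) + |b| ^ (p - 1)) := by
  rcases le_total b a with hba | hab
  · rw [abs_of_nonneg (sub_nonneg.2 hba)]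
    exact abs_signedRpow_sub_le_of_le hp hba
  · rw [abs_sub_comm, abs_sub_comm a, abs_of_nonneg (sub_nonneg.2 hab), add_comm (|a| ^ _)]
    exact abs_signedRpow_sub_le_of_le hp hab

/-- For `p < q` the constant is exactly `2`: `(2 · 2 ^ (q/p - 1)) ^ (p/q) = (2 ^ (q/p)) ^ (p/q)`. -/
lemma two_le_two_mul_ite_rpow {p q : ℝ} (hp : 0 < p) (hq : 0 < q) :
    (2 : ℝ) ≤ (2 * (if q ≤ p then 1 else 2 ^ (q / p - 1))) ^ (p / q) := by
  split_ifs with hqp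
  · rw [mul_one]
    calc (2 : ℝ) = 2 ^ (1 : ℝ) := (rpow_one 2).symm
      _ ≤ 2 ^ (p / q) := rpow_le_rpow_of_exponent_le one_le_two ((one_le_div hq).2 hqp)
  · rw [← rpow_one_add' zero_le_two (by rw [add_sub_cancel]; positivity), add_sub_cancel,
      ← rpow_mul zero_le_two, div_mul_div_comm, mul_comm q, div_self (by positivity), rpow_one]

/-- Pointwise estimate for signed `p`-th powers: with `p' = p/(p-1)` the conjugate
exponent and `k(p) = 1` if `p ≥ p'`, `k(p) = 2 ^ (p'/p - 1)` otherwise, there is a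
constant `C > 0` (depending only on `p`) such that
`|sign a * |a|^p − sign b * |b|^p| ≤ |a−b|^p + p (2 k(p))^{p/p'} |a−b| (|a|^{p−1}+|b|^{p−1}) C`,
and in particular for `a, b ∈ [−1,1]`,
`|sign a * |a|^p − sign b * |b|^p| ≤ |a−b|^p + p (2 k(p))^{p/p'} |a−b|`. -/
theorem stmt_2 (p q : ℝ) (hp : 1 < p) (hq : 1 / p + 1 / q = 1) :
    ∃ C : ℝ, 0 < C ∧
      (∀ a b : ℝ,
        |Real.sign a * |a| ^ p - Real.sign b * |b| ^ p| ≤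
          |a - b| ^ p +
            p * (2 * (if q ≤ p then 1 else 2 ^ (q / p - 1))) ^ (p / q) * |a - b| *
              (|a| ^ (p - 1) + |b| ^ (p - 1)) * C) ∧
      (∀ a b : ℝ, a ∈ Set.Icc (-1 : ℝ) 1 → b ∈ Set.Icc (-1 : ℝ) 1 →
        |Real.sign a * |a| ^ p - Real.sign b * |b| ^ p| ≤
          |a - b| ^ p +
            p * (2 * (if q ≤ p then 1 else 2 ^ (q / p - 1))) ^ (p / q) * |a - b|) := by
  have hpq : p.HolderConjugate q := holderConjugate_iff.2 ⟨hp, by simpa only [one_div] using hq⟩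
  set K := (2 * (if q ≤ p then 1 else 2 ^ (q / p - 1) : ℝ)) ^ (p / q)
  have hK : 2 ≤ K := two_le_two_mul_ite_rpow hpq.pos hpq.symm.pos
  have hpowers : ∀ a b : ℝ, 0 ≤ |a - b| ^ p := fun a b => rpow_nonneg (abs_nonneg _) _
  refine ⟨1, one_pos, fun a b => ?_, fun a b ha hb => ?_⟩
  · have hscale : 0 ≤ p * |a - b| := mul_nonneg hpq.pos.le (abs_nonneg _)
    have hsum : 0 ≤ |a| ^ (p - 1) + |b| ^ (p - 1) := by positivity
    calc |signedRpow p a - signedRpow p b|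
        ≤ p * |a - b| * (|a| ^ (p - 1) + |b| ^ (p - 1)) := abs_signedRpow_sub_le hp.le a b
      _ ≤ p * |a - b| * K * (|a| ^ (p - 1) + |b| ^ (p - 1)) :=
          mul_le_mul_of_nonneg_right (le_mul_of_one_le_right hscale (by linarith)) hsum
      _ = p * K * |a - b| * (|a| ^ (p - 1) + |b| ^ (p - 1)) * 1 := by ring
      _ ≤ _ := le_add_of_nonneg_left (hpowers a b)
  · have hle_one : ∀ x ∈ Icc (-1 : ℝ) 1, |x| ^ (p - 1) ≤ 1 := fun x hx =>
      rpow_le_one (abs_nonneg x) (abs_le.2 hx) (by linarith)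
    calc |signedRpow p a - signedRpow p b|
        ≤ p * |a - b| * (|a| ^ (p - 1) + |b| ^ (p - 1)) := abs_signedRpow_sub_le hp.le a b
      _ ≤ p * |a - b| * K := by
          gcongr
          linarith [hle_one a ha, hle_one b hb]
      _ = p * K * |a - b| := by ring
      _ ≤ _ := le_add_of_nonneg_left (hpowers a b)
end

section
/- Let 1 ≤ p < ∞, μ a measure, g ∈ L^p(μ) with ‖g‖ = 1, and g* ∈ (L^p(μ))* with ‖g*‖ = 1. Then for every ε > 0 there exists h ∈ L^p(μ) with ‖h‖ ≤ 1 and ⟨h, g*⟩ ≥ 1 − ε such that ‖(|g|^p + |h|^p)^{1/p}‖^p ≥ 2 − 2ε, provided g ≥ 0, g* ≥ 0 and h is allowed to be taken nonnegative. -/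
/-!
Since `‖(|g|^p + |h|^p)^{1/p}‖_p^p = ‖g‖_p^p + ‖h‖_p^p` for all `g, h ∈ L^p`, it suffices
to find a nonnegative `h` in the unit ball on which `g*` is almost `1`; then `‖h‖` is almost
`1` as well. Such an `h` is `|f|` for any `f` almost norming `g*`, because a positive
functional satisfies `|g* f| ≤ g* |f|` and the norm of `L^p` is solid.
-/

open MeasureTheory ENNReal

section PositiveFunctional

variable {E F : Type*} [AddCommGroup E] [Lattice E] [IsOrderedAddMonoid E]
  [FunLike F E ℝ] [AddMonoidHomClass F E ℝ]

theorem abs_apply_le_apply_abs {φ : F} (hφ : ∀ f, 0 ≤ f → 0 ≤ φ f) (f : E) :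
    |φ f| ≤ φ |f| := by
  have h₁ := hφ (|f| - f) (sub_nonneg.2 (le_abs_self f))
  have h₂ := hφ (|f| + f) (neg_le_iff_add_nonneg.1 (neg_le_abs f))
  rw [map_sub] at h₁
  rw [map_add] at h₂
  exact abs_le.2 ⟨by linarith, by linarith⟩

end PositiveFunctional

theorem ContinuousLinearMap.exists_nonneg_norm_le_one_lt_apply {E : Type*}
    [NormedAddCommGroup E] [Lattice E] [IsOrderedAddMonoid E] [HasSolidNorm E] [NormedSpace ℝ E]
    {φ : E →L[ℝ] ℝ} (hφ : ∀ f, 0 ≤ f → 0 ≤ φ f) {r : ℝ} (hr : r < ‖φ‖) :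
    ∃ h, 0 ≤ h ∧ ‖h‖ ≤ 1 ∧ r < φ h := by
  obtain ⟨f, hf, hrf⟩ := φ.exists_lt_apply_of_lt_opNorm hr
  refine ⟨|f|, abs_nonneg f, (norm_abs_eq_norm f).trans_le hf.le, ?_⟩
  exact hrf.trans_le (abs_apply_le_apply_abs hφ f)

theorem Real.enorm_rpow_add_rpow_rpow_inv {q : ℝ} (hq : 0 < q) (a b : ℝ) :
    ‖(|a| ^ q + |b| ^ q) ^ (1 / q)‖ₑ ^ q = ‖a‖ₑ ^ q + ‖b‖ₑ ^ q := by
  have hsum : 0 ≤ |a| ^ q + |b| ^ q := by positivity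
  rw [Real.enorm_eq_ofReal (by positivity), ENNReal.ofReal_rpow_of_nonneg (by positivity) hq.le,
    ← Real.rpow_mul hsum, one_div_mul_cancel hq.ne', Real.rpow_one,
    ENNReal.ofReal_add (by positivity) (by positivity), Real.enorm_eq_ofReal_abs,
    Real.enorm_eq_ofReal_abs, ENNReal.ofReal_rpow_of_nonneg (abs_nonneg a) hq.le,
    ENNReal.ofReal_rpow_of_nonneg (abs_nonneg b) hq.le]

theorem MeasureTheory.eLpNorm_rpow_add_rpow_rpow_inv {Ω : Type*} [MeasurableSpace Ω]
    {μ : Measure Ω} {p : ℝ≥0∞} (hp0 : p ≠ 0) (hp : p ≠ ∞) {f g : Ω → ℝ}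
    (hf : AEMeasurable f μ) :
    eLpNorm (fun ω => (|f ω| ^ p.toReal + |g ω| ^ p.toReal) ^ (1 / p.toReal)) p μ ^ p.toReal =
      eLpNorm f p μ ^ p.toReal + eLpNorm g p μ ^ p.toReal := by
  have hq : 0 < p.toReal := ENNReal.toReal_pos hp0 hp
  simp only [eLpNorm_eq_eLpNorm' hp0 hp, ← lintegral_rpow_enorm_eq_rpow_eLpNorm' hq,
    Real.enorm_rpow_add_rpow_rpow_inv hq]
  exact lintegral_add_left' (hf.enorm.pow_const _) _

theorem MeasureTheory.Lp.norm_rpow_add_rpow_rpow_inv {Ω : Type*} [MeasurableSpace Ω]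
    {μ : Measure Ω} {p : ℝ≥0∞} [Fact (1 ≤ p)] (hp : p ≠ ∞) (f g : Lp ℝ p μ) :
    (eLpNorm (fun ω => (|f ω| ^ p.toReal + |g ω| ^ p.toReal) ^ (1 / p.toReal)) p μ).toReal
        ^ p.toReal = ‖f‖ ^ p.toReal + ‖g‖ ^ p.toReal := by
  have hp0 : p ≠ 0 := (zero_lt_one.trans_le Fact.out).ne'
  rw [ENNReal.toReal_rpow,
    eLpNorm_rpow_add_rpow_rpow_inv hp0 hp (Lp.aestronglyMeasurable f).aemeasurable,
    ENNReal.toReal_add (rpow_ne_top_of_nonneg toReal_nonneg (Lp.eLpNorm_ne_top f))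
      (rpow_ne_top_of_nonneg toReal_nonneg (Lp.eLpNorm_ne_top g)),
    ← ENNReal.toReal_rpow, ← ENNReal.toReal_rpow, Lp.norm_def, Lp.norm_def]

theorem stmt_4_general {Ω : Type*} [MeasurableSpace Ω] (μ : Measure Ω) (p : ℝ≥0∞)
    [Fact (1 ≤ p)] (hp : p ≠ ∞)
    (g : Lp ℝ p μ) (hg1 : ‖g‖ = 1)
    (gstar : Lp ℝ p μ →L[ℝ] ℝ) (hgstar1 : ‖gstar‖ = 1)
    (hgstar0 : ∀ f : Lp ℝ p μ, (∀ᵐ ω ∂μ, 0 ≤ f ω) → 0 ≤ gstar f)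
    (ε : ℝ) (hε : 0 < ε) :
    ∃ h : Lp ℝ p μ, ‖h‖ ≤ 1 ∧ (∀ᵐ ω ∂μ, 0 ≤ h ω) ∧ 1 - ε ≤ gstar h ∧
      2 - 2 * ε ≤
        (eLpNorm (fun ω => (|g ω| ^ p.toReal + |h ω| ^ p.toReal) ^ (1 / p.toReal))
            p μ).toReal ^ p.toReal := by
  have hq1 : 1 ≤ p.toReal := by simpa using ENNReal.toReal_mono hp (Fact.out : 1 ≤ p)
  set q := p.toReal
  have hq0 : 0 < q := zero_lt_one.trans_le hq1
  -- Bernoulli's inequality turns a norm defect of `ε / q` into a defect of `ε` in `‖h‖ ^ q`.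
  obtain ⟨h, h0, hh1, hgh⟩ := gstar.exists_nonneg_norm_le_one_lt_apply
    (fun f hf => hgstar0 f ((Lp.coeFn_nonneg f).2 hf)) (r := 1 - ε / q)
    (by rw [hgstar1]; linarith [div_pos hε hq0])
  have hgh_le : gstar h ≤ ‖h‖ := by
    simpa [hgstar1] using (le_abs_self _).trans (gstar.le_opNorm h)
  refine ⟨h, hh1, (Lp.coeFn_nonneg h).2 h0, by linarith [div_le_self hε.le hq1], ?_⟩
  rw [Lp.norm_rpow_add_rpow_rpow_inv hp, hg1, Real.one_rpow]
  have hbernoulli : 1 + q * (‖h‖ - 1) ≤ ‖h‖ ^ q := by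
    simpa using
      one_add_mul_self_le_rpow_one_add (s := ‖h‖ - 1) (by linarith [norm_nonneg h]) hq1
  have hdefect : q * (1 - ‖h‖) ≤ ε :=
    calc q * (1 - ‖h‖) ≤ q * (ε / q) := by gcongr; linarith
      _ = ε := mul_div_cancel₀ _ hq0.ne'
  linarith

/-- Positive slice condition for `L^p(μ)`: given norm-one `g ≥ 0` in `L^p` and a
norm-one positive functional `g*`, for every `ε > 0` there is a nonnegative `h` in the
unit ball with `⟨h, g*⟩ ≥ 1 − ε` and `‖(|g|^p + |h|^p)^{1/p}‖^p ≥ 2 − 2ε`. -/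
theorem stmt_4 {Ω : Type*} [MeasurableSpace Ω] (μ : Measure Ω) (p : ℝ≥0∞)
    [Fact (1 ≤ p)] (hp : p ≠ ∞)
    (g : Lp ℝ p μ) (hg1 : ‖g‖ = 1) (hg0 : ∀ᵐ ω ∂μ, 0 ≤ g ω)
    (gstar : Lp ℝ p μ →L[ℝ] ℝ) (hgstar1 : ‖gstar‖ = 1)
    (hgstar0 : ∀ f : Lp ℝ p μ, (∀ᵐ ω ∂μ, 0 ≤ f ω) → 0 ≤ gstar f)
    (ε : ℝ) (hε : 0 < ε) :
    ∃ h : Lp ℝ p μ, ‖h‖ ≤ 1 ∧ (∀ᵐ ω ∂μ, 0 ≤ h ω) ∧ 1 - ε ≤ gstar h ∧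
      2 - 2 * ε ≤
        (eLpNorm (fun ω => (|g ω| ^ p.toReal + |h ω| ^ p.toReal) ^ (1 / p.toReal))
            p μ).toReal ^ p.toReal :=
  stmt_4_general μ p hp g hg1 gstar hgstar1 hgstar0 ε hε
end
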